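/- arXiv:2508.19214 — 4 statements merged into one kernel-verified Lean document; each statement's English description precedes it below -/
import Mathlib

section
/- Let K be a group, A an n-torsion K-module, Â = Hom(A, ℤ/n), γ ∈ Z²(K,A) and γ̂ ∈ Z²(K,Â) normalized 2-cocycles, and e ∈ C³(K,ℤ/n) a normalized 3-cochain with de = γ ∪ γ̂. Let G = A ⋊_γ K with projections a (set map to A) and k (homomorphism to K). Then ω = k*e + a ∪ k*γ̂ is a 3-cocycle, i.e., dω = 0 in C⁴(G, ℤ/n). -/
/-- Multiplication of the extension `A ⋊_γ K` defined by a 2-cocycle `γ`. -/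
def cMul {K A : Type*} [Group K] [AddCommGroup A] [DistribMulAction K A]
    (γ : K → K → A) (p q : A × K) : A × K :=
  (p.1 + p.2 • q.1 + γ p.2 q.2, p.2 * q.2)

/-- The dual action of `K` on `Â = Hom(A, ℤ/n)`: `(l • φ)(a) = φ(l⁻¹ • a)`. -/
def dact {K A : Type*} [Group K] [AddCommGroup A] [DistribMulAction K A] (n : ℕ)
    (l : K) (φ : A →+ ZMod n) : A →+ ZMod n :=
  φ.comp (DistribMulAction.toAddMonoidHom A l⁻¹)

/-- The 3-cochain `ω = k*e + a ∪ k*γ̂` on `G = A ⋊_γ K` with values in `ℤ/n`. -/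
def omegaC {K A : Type*} [Group K] [AddCommGroup A] [DistribMulAction K A] (n : ℕ)
    (γhat : K → K → (A →+ ZMod n)) (e : K → K → K → ZMod n)
    (g₁ g₂ g₃ : A × K) : ZMod n :=
  e g₁.2 g₂.2 g₃.2 + dact n g₁.2 (γhat g₂.2 g₃.2) g₁.1

/-- Given duality data `(K, A, γ, γ̂, e)` with `de = γ ∪ γ̂`, the 3-cochain
`ω = k*e + a ∪ k*γ̂` on `G = A ⋊_γ K` is a cocycle: `dω = 0`. -/
theorem stmt4 {K A : Type*} [Group K] [AddCommGroup A] [DistribMulAction K A]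
    (n : ℕ) (htor : ∀ a : A, n • a = 0)
    (γ : K → K → A) (γhat : K → K → (A →+ ZMod n)) (e : K → K → K → ZMod n)
    (hγcoc : ∀ l₁ l₂ l₃ : K,
      l₁ • γ l₂ l₃ - γ (l₁ * l₂) l₃ + γ l₁ (l₂ * l₃) - γ l₁ l₂ = 0)
    (hγn₁ : ∀ l : K, γ l 1 = 0) (hγn₂ : ∀ l : K, γ 1 l = 0)
    (hγhatcoc : ∀ l₁ l₂ l₃ : K,
      dact n l₁ (γhat l₂ l₃) - γhat (l₁ * l₂) l₃ + γhat l₁ (l₂ * l₃) - γhat l₁ l₂ = 0)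
    (hγhatn₁ : ∀ l : K, γhat l 1 = 0) (hγhatn₂ : ∀ l : K, γhat 1 l = 0)
    (hen : ∀ l l' : K, e 1 l l' = 0 ∧ e l 1 l' = 0 ∧ e l l' 1 = 0)
    (hde : ∀ l₁ l₂ l₃ l₄ : K,
      e l₂ l₃ l₄ - e (l₁ * l₂) l₃ l₄ + e l₁ (l₂ * l₃) l₄ - e l₁ l₂ (l₃ * l₄) + e l₁ l₂ l₃
        = dact n (l₁ * l₂) (γhat l₃ l₄) (γ l₁ l₂)) :
    ∀ g₁ g₂ g₃ g₄ : A × K,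
      omegaC n γhat e g₂ g₃ g₄ - omegaC n γhat e (cMul γ g₁ g₂) g₃ g₄
        + omegaC n γhat e g₁ (cMul γ g₂ g₃) g₄ - omegaC n γhat e g₁ g₂ (cMul γ g₃ g₄)
        + omegaC n γhat e g₁ g₂ g₃ = 0 := by
  rintro ⟨a₁, l₁⟩ ⟨a₂, l₂⟩ ⟨a₃, l₃⟩ ⟨a₄, l₄⟩
  have h1 := hde l₁ l₂ l₃ l₄
  have h2 := congrArg (fun φ : A →+ ZMod n => φ (l₁⁻¹ • a₁)) (hγhatcoc l₂ l₃ l₄)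
  simp only [dact, AddMonoidHom.sub_apply, AddMonoidHom.add_apply, AddMonoidHom.coe_comp,
    Function.comp_apply, DistribMulAction.toAddMonoidHom_apply, AddMonoidHom.zero_apply, mul_inv_rev, mul_smul] at h1 h2
  simp only [omegaC, cMul, dact, AddMonoidHom.coe_comp, Function.comp_apply,
    DistribMulAction.toAddMonoidHom_apply, mul_inv_rev, mul_smul, smul_add, map_add,
    inv_smul_smul]
  linear_combination h1 - h2
end

section
/- Let G = A ⋊_γ K with ω = k*e + a ∪ k*γ̂ ∈ Z³(G,ℤ/n) as in the duality data, and let g = (m,1) ∈ G with m ∈ A. Then the homotopy operator satisfies h_g(ω) = -m ∪ k*γ̂, i.e., for all y, y' ∈ G: h_g(ω)(y,y') = -⟨m, γ̂(k(y), k(y'))⟩. -/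
/-- For `g = (m,1) ∈ G = A ⋊_γ K` (so `g⁻¹ = (-m,1)` and `ad_g(y) = g·y·g⁻¹`), the
chain homotopy `h_g(c)(y,y') = c(g⁻¹, ad_g y, ad_g y') - c(y, g⁻¹, ad_g y') + c(y,y',g⁻¹)`
applied to `ω = k*e + a ∪ k*γ̂` satisfies `h_g(ω) = -m ∪ k*γ̂`, i.e.
`h_g(ω)(y,y') = -⟨m, γ̂(k(y),k(y'))⟩`. -/
theorem stmt7 {K A : Type*} [Group K] [AddCommGroup A] [DistribMulAction K A]
    (n : ℕ) (htor : ∀ a : A, n • a = 0)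
    (γ : K → K → A) (γhat : K → K → (A →+ ZMod n)) (e : K → K → K → ZMod n)
    (hγcoc : ∀ l₁ l₂ l₃ : K,
      l₁ • γ l₂ l₃ - γ (l₁ * l₂) l₃ + γ l₁ (l₂ * l₃) - γ l₁ l₂ = 0)
    (hγn₁ : ∀ l : K, γ l 1 = 0) (hγn₂ : ∀ l : K, γ 1 l = 0)
    (hγhatcoc : ∀ l₁ l₂ l₃ : K,
      dact n l₁ (γhat l₂ l₃) - γhat (l₁ * l₂) l₃ + γhat l₁ (l₂ * l₃) - γhat l₁ l₂ = 0)
    (hγhatn₁ : ∀ l : K, γhat l 1 = 0) (hγhatn₂ : ∀ l : K, γhat 1 l = 0)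
    (hen : ∀ l l' : K, e 1 l l' = 0 ∧ e l 1 l' = 0 ∧ e l l' 1 = 0)
    (hde : ∀ l₁ l₂ l₃ l₄ : K,
      e l₂ l₃ l₄ - e (l₁ * l₂) l₃ l₄ + e l₁ (l₂ * l₃) l₄ - e l₁ l₂ (l₃ * l₄) + e l₁ l₂ l₃
        = dact n (l₁ * l₂) (γhat l₃ l₄) (γ l₁ l₂)) :
    ∀ (m : A) (y y' : A × K),
      omegaC n γhat e ((-m, 1) : A × K)
          (cMul γ (cMul γ (m, 1) y) (-m, 1)) (cMul γ (cMul γ (m, 1) y') (-m, 1))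
        - omegaC n γhat e y ((-m, 1) : A × K) (cMul γ (cMul γ (m, 1) y') (-m, 1))
        + omegaC n γhat e y y' ((-m, 1) : A × K)
        = - γhat y.2 y'.2 m := by
  intro m y y'
  simp [omegaC, cMul, dact, hγn₁, hγn₂, hγhatn₁, hγhatn₂,
    (hen _ _).1, (hen _ _).2.1, (hen _ _).2.2]
end

section
/- Let M = ℚ(√m) be a real quadratic field where m is a squarefree positive integer all of whose prime divisors are ≡ 1 (mod 4). Then -1 is a norm from M, i.e., there exists u ∈ M with norm_{M/ℚ}(u) = -1. -/
/-!
Since every prime factor of `m` is `≡ 1 (mod 4)`, Fermat's two-squares theorem writes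
`m = a² + b²` with `b ≠ 0`. Then `u = (a + √m) / b` is a root of `X² - (2a/b) X - 1`, and it is
irrational because `√m` generates the quadratic field, so `N(u) = -1`.
-/

open Polynomial IntermediateField Module

theorem Algebra.norm_eq_of_finrank_eq_two_of_sq_sub_mul_add_eq_zero {K L : Type*} [Field K]
    [Field L] [Algebra K L] (hL : finrank K L = 2) {x : L} (hx : x ∉ (algebraMap K L).range)
    {t n : K} (h : x ^ 2 - algebraMap K L t * x + algebraMap K L n = 0) :
    Algebra.norm K x = n := by
  have : FiniteDimensional K L := Module.finite_of_finrank_eq_succ hL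
  have hint : IsIntegral K x := .of_finite K x
  have hmonic : (X ^ 2 - C t * X + C n : K[X]).Monic := by monicity!
  have hdeg : (X ^ 2 - C t * X + C n : K[X]).natDegree = 2 := by compute_degree!
  have hminpoly : minpoly K x = X ^ 2 - C t * X + C n :=
    eq_of_monic_of_associated (minpoly.monic hint) hmonic <|
      associated_of_dvd_of_natDegree_le (minpoly.dvd K x (by simpa using h)) hmonic.ne_zero
        (by rw [hdeg]; exact (minpoly.two_le_natDegree_iff hint).2 hx)
  have hdegx : finrank K K⟮x⟯ = 2 := by rw [adjoin.finrank hint, hminpoly, hdeg]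
  have htop : finrank K⟮x⟯ L = 1 := by
    have := finrank_mul_finrank K K⟮x⟯ L
    rw [hdegx, hL] at this
    omega
  have hnorm_gen :=
    PowerBasis.norm_gen_eq_coeff_zero_minpoly (IntermediateField.adjoin.powerBasis hint)
  rw [IntermediateField.adjoin.powerBasis_gen, IntermediateField.adjoin.powerBasis_dim,
    minpoly_gen, hminpoly, hdeg] at hnorm_gen
  rw [norm_eq_norm_adjoin, htop, pow_one, hnorm_gen]
  simp

theorem Nat.exists_sq_add_sq_of_forall_prime_dvd_mod_four_eq_one {m : ℕ} (hm : m ≠ 0)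
    (hp : ∀ p : ℕ, p.Prime → p ∣ m → p % 4 = 1) : ∃ a b : ℕ, b ≠ 0 ∧ m = a ^ 2 + b ^ 2 := by
  obtain ⟨x, y, hxy⟩ : ∃ x y : ℕ, m = x ^ 2 + y ^ 2 := by
    refine Nat.eq_sq_add_sq_iff.2 fun q hq hq3 ↦ ?_
    have := hp q (Nat.prime_of_mem_primeFactors hq) (Nat.dvd_of_mem_primeFactors hq)
    omega
  rcases eq_or_ne y 0 with rfl | hy
  · exact ⟨0, x, by rintro rfl; simp_all, by rw [hxy]; ring⟩
  · exact ⟨x, y, hy, hxy⟩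

theorem notMem_range_algebraMap_of_adjoin_eq_top {K L : Type*} [Field K] [Field L]
    [Algebra K L] (hL : finrank K L ≠ 1) {α : L} (hα : Algebra.adjoin K {α} = ⊤) :
    α ∉ (algebraMap K L).range := by
  intro hmem
  refine hL (Subalgebra.bot_eq_top_iff_finrank_eq_one.1 (le_antisymm bot_le ?_))
  rw [← hα]
  exact Algebra.adjoin_le (Set.singleton_subset_iff.2 hmem)

theorem stmt15_general (M : Type) [Field M] [NumberField M]
    (hdim : Module.finrank ℚ M = 2)
    (m : ℕ)
    (hp : ∀ p : ℕ, p.Prime → p ∣ m → p % 4 = 1)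
    (α : M) (hα : α ^ 2 = (m : M)) (hgen : Algebra.adjoin ℚ {α} = ⊤) :
    ∃ u : M, Algebra.norm ℚ u = -1 := by
  have hα_irrat : α ∉ (algebraMap ℚ M).range :=
    notMem_range_algebraMap_of_adjoin_eq_top (by omega) hgen
  have hm : m ≠ 0 := by
    rintro rfl
    exact hα_irrat ⟨0, by rw [map_zero, eq_comm]; simpa using hα⟩
  obtain ⟨a, b, hb, hab⟩ := Nat.exists_sq_add_sq_of_forall_prime_dvd_mod_four_eq_one hm hp
  have hbM : (b : M) ≠ 0 := Nat.cast_ne_zero.2 hb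
  refine ⟨(a + α) / b, Algebra.norm_eq_of_finrank_eq_two_of_sq_sub_mul_add_eq_zero hdim
    (t := 2 * a / b) ?_ ?_⟩
  · rintro ⟨r, hr⟩
    refine hα_irrat ⟨b * r - a, ?_⟩
    rw [map_sub, map_mul, hr, map_natCast, map_natCast]
    field_simp
    ring
  · simp only [map_div₀, map_mul, map_ofNat, map_natCast, map_neg, map_one]
    field_simp
    rw [hab, Nat.cast_add, Nat.cast_pow, Nat.cast_pow] at hα
    linear_combination hα

/-- Let `M = ℚ(√m)` be a real quadratic field, where `m` is a squarefree positive
integer all of whose prime divisors are `≡ 1 (mod 4)`.  Then `-1` is a norm from `M`: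
there exists `u ∈ M` with `norm_{M/ℚ}(u) = -1`. -/
theorem stmt15 (M : Type) [Field M] [NumberField M]
    (hdim : Module.finrank ℚ M = 2)
    (m : ℕ) (hsf : Squarefree m) (hpos : 0 < m)
    (hp : ∀ p : ℕ, p.Prime → p ∣ m → p % 4 = 1)
    (α : M) (hα : α ^ 2 = (m : M)) (hgen : Algebra.adjoin ℚ {α} = ⊤) :
    ∃ u : M, Algebra.norm ℚ u = -1 :=
  stmt15_general M hdim m hp α hα hgen
end

section
/- Suppose Δ and π are groups, A a finite abelian group (trivially or nontrivially a Δ-module) with Â = Hom(A,ℤ/n), such that for every i the cup product H^i(Δ,A) × H^{3-i}(Δ,π;Â) → H³(Δ,π;ℤ/n) ≅ (1/n)ℤ/ℤ is a perfect pairing of finite abelian groups. If additionally the long exact sequence relating H*(Δ,π;A), H*(Δ,A), H*(π,A) holds and Â ≅ A as abelian groups, then χ(Δ,A)² = χ(π,A), where χ denotes the multiplicative Euler characteristic χ(Φ,M) = ∏_i (#H^i(Φ,M))^{(-1)^i} (all groups assumed finite and almost all trivial). -/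
/-!
The long exact sequence splits at every term: the order of a group is the product of the orders
of the images of the maps into and out of it. In the alternating product these image orders
cancel in pairs, so `χ(Δ,A) = χ(Δ,π;A) · χ(π,A)`. A finite abelian group has as many characters
with values in `ℚ/ℤ` as elements (structure theorem, plus: `ℚ/ℤ` has exactly `n` points killed
by `n`), so the duality gives `#H^i(Δ,A) = #H^{3-i}(Δ,π;A)`; as `i ↦ 3 - i` flips parity,
`χ(Δ,π;A) = χ(Δ,A)⁻¹`.
-/

open Function Finset

namespace AddCircle

variable {𝕜 : Type*} [Field 𝕜] [LinearOrder 𝕜] [IsStrictOrderedRing 𝕜] (p : 𝕜) [Fact (0 < p)]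

theorem card_torsion {n : ℕ} (hn : 0 < n) : Nat.card {x : AddCircle p | n • x = 0} = n := by
  set u : AddCircle p := ((p / n : 𝕜) : AddCircle p)
  have hu : addOrderOf u = n := addOrderOf_period_div hn
  have hsub : (AddSubgroup.zmultiples u : Set (AddCircle p)) ⊆ {x | n • x = 0} := by
    rintro _ ⟨k, rfl⟩
    rw [Set.mem_ofPred_eq, smul_comm, ← hu, addOrderOf_nsmul_eq_zero, smul_zero]
  have hle := card_torsion_le_of_isSMulRegular p n hn.ne'
    (.of_right_eq_zero_of_smul fun _ ↦ by simp [hn.ne'])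
  refine le_antisymm ?_ ?_
  · rw [Nat.card_coe_set_eq, Set.ncard_def]
    exact ENat.toNat_le_of_le_natCast hle
  · calc n = Nat.card (AddSubgroup.zmultiples u) := by rw [Nat.card_zmultiples, hu]
      _ ≤ _ := Nat.card_mono (finite_torsion p hn) hsub

theorem card_addMonoidHom_zmod {n : ℕ} (hn : 0 < n) : Nat.card (ZMod n →+ AddCircle p) = n := by
  refine .trans (Nat.card_congr ?_) (card_torsion p hn)
  refine (((zmultiplesHom _).subtypeEquiv fun x ↦ ?_).trans (ZMod.lift n)).symm
  simp

theorem card_addMonoidHom (G : Type*) [AddCommGroup G] [Finite G] :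
    Nat.card (G →+ AddCircle p) = Nat.card G := by
  classical
  obtain ⟨ι, _, n, hn, ⟨e⟩⟩ := AddCommGroup.equiv_directSum_zmod_of_finite' G
  let e' := e.trans (DirectSum.addEquivProd _)
  rw [Nat.card_congr e'.toEquiv, Nat.card_congr e'.addMonoidHomCongrLeft.toEquiv,
    Nat.card_congr (Pi.addMonoidHomAddEquiv _ _).toEquiv, Nat.card_pi, Nat.card_pi]
  exact Finset.prod_congr rfl fun i _ ↦ by
    rw [card_addMonoidHom_zmod p (zero_lt_one.trans (hn i)), Nat.card_zmod]

end AddCircle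

theorem Function.Exact.natCard_eq_card_range_mul_card_range {X Y Z : Type*}
    [AddGroup X] [AddGroup Y] [AddGroup Z] {f : X →+ Y} {g : Y →+ Z} (h : Exact f g) :
    Nat.card Y = Nat.card f.range * Nat.card g.range := by
  rw [g.ker.card_eq_card_quotient_mul_card_addSubgroup,
    Nat.card_congr (QuotientAddGroup.quotientKerEquivRange g).toEquiv, h.addMonoidHom_ker_eq,
    mul_comm]

theorem mulSupport_natCard_subset {ι : Type*} {X : ι → Type*} [∀ i, Nonempty (X i)] {s : Set ι}
    (h : ∀ i ∉ s, Subsingleton (X i)) : mulSupport (fun i ↦ Nat.card (X i)) ⊆ s :=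
  mulSupport_subset_iff'.2 fun i hi ↦ Nat.card_eq_one_iff_unique.2 ⟨h i hi, inferInstance⟩

noncomputable def eulerChar (f : ℤ → ℕ) : ℚ := ∏ᶠ i, (f i : ℚ) ^ (i.negOnePow : ℤ)

theorem eulerChar_ne_zero {f : ℤ → ℕ} (hf : ∀ i, f i ≠ 0) : eulerChar f ≠ 0 :=
  finprod_ne_zero fun i ↦ zpow_ne_zero _ (Nat.cast_ne_zero.2 (hf i))

theorem eulerChar_mul {f g : ℤ → ℕ} (hf : HasFiniteMulSupport f) (hg : HasFiniteMulSupport g) :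
    eulerChar (fun i ↦ f i * g i) = eulerChar f * eulerChar g := by
  have hfin {h : ℤ → ℕ} (hh : HasFiniteMulSupport h) :
      HasFiniteMulSupport fun i ↦ (h i : ℚ) ^ (i.negOnePow : ℤ) :=
    hh.subset (mulSupport_subset_iff'.2 fun i hi ↦ by simp [notMem_mulSupport.1 hi])
  simp only [eulerChar, Nat.cast_mul, mul_zpow]
  exact finprod_mul_distrib (hfin hf) (hfin hg)

theorem eulerChar_comp_of_negOnePow_eq_neg (e : ℤ ≃ ℤ) (he : ∀ i, (e i).negOnePow = -i.negOnePow)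
    (f : ℤ → ℕ) : eulerChar (f ∘ e) = (eulerChar f)⁻¹ := by
  rw [eulerChar, eulerChar, ← finprod_inv_distrib,
    ← finprod_comp_equiv e (f := fun i ↦ ((f i : ℚ) ^ (i.negOnePow : ℤ))⁻¹)]
  refine finprod_congr fun i ↦ ?_
  rw [he, Units.val_neg, zpow_neg, inv_inv, comp_apply]

theorem eulerChar_comp_sub_one (f : ℤ → ℕ) : eulerChar (fun i ↦ f (i - 1)) = (eulerChar f)⁻¹ :=
  eulerChar_comp_of_negOnePow_eq_neg (Equiv.subRight 1) (fun i ↦ by simp [Int.negOnePow_sub]) f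

theorem eulerChar_comp_sub_left {k : ℤ} (hk : Odd k) (f : ℤ → ℕ) :
    eulerChar (fun i ↦ f (k - i)) = (eulerChar f)⁻¹ :=
  eulerChar_comp_of_negOnePow_eq_neg (Equiv.subLeft k)
    (fun i ↦ by simp [Int.negOnePow_sub, Int.negOnePow_odd k hk]) f

theorem eulerChar_eq_prod_range {f : ℤ → ℕ} {N : ℕ} (hf : mulSupport f ⊆ Set.Ico 0 (N : ℤ)) :
    eulerChar f = ∏ t ∈ range N, (f t : ℚ) ^ ((-1 : ℤ) ^ t) := by
  rw [eulerChar, finprod_eq_prod_of_mulSupport_subset _ (s := (range N).map Nat.castEmbedding),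
    prod_map]
  · simp [Int.coe_negOnePow_natCast]
  · intro i hi
    obtain ⟨h0, hN⟩ : 0 ≤ i ∧ i < N := hf fun (h1 : f i = 1) ↦ hi (by simp [h1])
    simp only [coe_map, Nat.castEmbedding_apply, coe_range, Set.mem_image, Set.mem_Iio]
    exact ⟨i.toNat, by omega, by omega⟩

theorem eulerChar_natCard_of_exact {A B C : ℤ → Type*} [∀ i, AddGroup (A i)]
    [∀ i, AddGroup (B i)] [∀ i, AddGroup (C i)] [∀ i, Finite (C i)]
    (f : ∀ i, A i →+ B i) (g : ∀ i, B i →+ C i) (δ : ∀ i, C i →+ A (i + 1))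
    (hfg : ∀ i, Exact (f i) (g i)) (hgδ : ∀ i, Exact (g i) (δ i))
    (hδf : ∀ i, Exact (δ i) (f (i + 1)))
    (hA : HasFiniteMulSupport fun i ↦ Nat.card (A i))
    (hC : HasFiniteMulSupport fun i ↦ Nat.card (C i)) :
    eulerChar (fun i ↦ Nat.card (B i))
      = eulerChar (fun i ↦ Nat.card (A i)) * eulerChar (fun i ↦ Nat.card (C i)) := by
  set r : ℤ → ℕ := fun i ↦ Nat.card (f i).range
  set s : ℤ → ℕ := fun i ↦ Nat.card (g i).range
  set k : ℤ → ℕ := fun i ↦ Nat.card (δ i).range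
  have hcardA (i : ℤ) : Nat.card (A i) = k (i - 1) * r i := by
    obtain ⟨j, rfl⟩ : ∃ j, i = j + 1 := ⟨i - 1, by ring⟩
    rw [add_sub_cancel_right]
    exact (hδf j).natCard_eq_card_range_mul_card_range
  have hcardB (i : ℤ) : Nat.card (B i) = r i * s i := (hfg i).natCard_eq_card_range_mul_card_range
  have hcardC (i : ℤ) : Nat.card (C i) = s i * k i := (hgδ i).natCard_eq_card_range_mul_card_range
  have hr : HasFiniteMulSupport r :=
    hA.subset fun i hi h1 ↦ hi (Nat.eq_one_of_mul_eq_one_left ((hcardA i).symm.trans h1))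
  have hs : HasFiniteMulSupport s :=
    hC.subset fun i hi h1 ↦ hi (Nat.eq_one_of_mul_eq_one_right ((hcardC i).symm.trans h1))
  have hk : HasFiniteMulSupport k :=
    hC.subset fun i hi h1 ↦ hi (Nat.eq_one_of_mul_eq_one_left ((hcardC i).symm.trans h1))
  have hk_ne : eulerChar k ≠ 0 := eulerChar_ne_zero fun i ↦
    have := Finite.of_surjective _ (δ i).rangeRestrict_surjective
    Nat.card_pos.ne'
  rw [funext hcardA, funext hcardB, funext hcardC, eulerChar_mul hr hs, eulerChar_mul hs hk,
    eulerChar_mul (hk.fun_comp_of_injective (g := fun i ↦ i - 1) sub_left_injective) hr,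
    eulerChar_comp_sub_one]
  field_simp

theorem stmt18_general (HΔA HπA HrelA HrelAhat : ℤ → Type)
    [∀ i, AddCommGroup (HΔA i)] [∀ i, Finite (HΔA i)]
    [∀ i, AddCommGroup (HπA i)] [∀ i, Finite (HπA i)]
    [∀ i, AddCommGroup (HrelA i)]
    [∀ i, AddCommGroup (HrelAhat i)] [∀ i, Finite (HrelAhat i)]
    (hneg : ∀ i : ℤ, i < 0 → Subsingleton (HΔA i) ∧ Subsingleton (HπA i)
        ∧ Subsingleton (HrelA i) ∧ Subsingleton (HrelAhat i))
    (frel : ∀ i : ℤ, HrelA i →+ HΔA i) (fres : ∀ i : ℤ, HΔA i →+ HπA i)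
    (fconn : ∀ i : ℤ, HπA i →+ HrelA (i + 1))
    (hex1 : ∀ i : ℤ, Function.Exact (fconn i) (frel (i + 1)))
    (hex2 : ∀ i : ℤ, Function.Exact (frel i) (fres i))
    (hex3 : ∀ i : ℤ, Function.Exact (fres i) (fconn i))
    (hdual : ∀ i : ℤ, Nonempty (HΔA i ≃+ (HrelAhat (3 - i) →+ AddCircle (1 : ℚ))))
    (hhat : ∀ i : ℤ, Nat.card (HrelAhat i) = Nat.card (HrelA i)) :
    ∀ N : ℕ, (∀ i : ℤ, (N : ℤ) ≤ i → Subsingleton (HΔA i) ∧ Subsingleton (HπA i)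
        ∧ Subsingleton (HrelA i) ∧ Subsingleton (HrelAhat i)) →
      (∏ t ∈ Finset.range N, ((Nat.card (HΔA t) : ℚ) ^ ((-1 : ℤ) ^ t))) ^ 2
        = ∏ t ∈ Finset.range N, ((Nat.card (HπA t) : ℚ) ^ ((-1 : ℤ) ^ t)) := by
  intro N hN
  have hout (i : ℤ) (hi : i ∉ Set.Ico 0 (N : ℤ)) : Subsingleton (HΔA i) ∧ Subsingleton (HπA i)
      ∧ Subsingleton (HrelA i) ∧ Subsingleton (HrelAhat i) := by
    rcases lt_or_ge i 0 with h | h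
    · exact hneg i h
    · exact hN i (by simp_all)
  have hΔ := mulSupport_natCard_subset fun i hi ↦ (hout i hi).1
  have hπ := mulSupport_natCard_subset fun i hi ↦ (hout i hi).2.1
  have hrel := mulSupport_natCard_subset fun i hi ↦ (hout i hi).2.2.1
  have hχrel :
      eulerChar (fun i ↦ Nat.card (HrelA i)) = (eulerChar fun i ↦ Nat.card (HΔA i))⁻¹ := by
    rw [← eulerChar_comp_sub_left (by decide : Odd (3 : ℤ))]
    congr 1 with i
    rw [Nat.card_congr (hdual (3 - i)).some.toEquiv, AddCircle.card_addMonoidHom, hhat,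
      sub_sub_cancel]
  have hχexact := eulerChar_natCard_of_exact frel fres fconn hex2 hex3 hex1
    ((Set.finite_Ico _ _).subset hrel) ((Set.finite_Ico _ _).subset hπ)
  have hne : eulerChar (fun i ↦ Nat.card (HΔA i)) ≠ 0 :=
    eulerChar_ne_zero fun _ ↦ Nat.card_pos.ne'
  rw [← eulerChar_eq_prod_range hΔ, ← eulerChar_eq_prod_range hπ]
  rwa [hχrel, eq_inv_mul_iff_mul_eq₀ hne, ← sq] at hχexact

/-- Abstract form of the Euler-characteristic duality: suppose `H^•(Δ,A)`, `H^•(π,A)`,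
`H^•(Δ,π;A)` and `H^•(Δ,π;Â)` are families of finite abelian groups (vanishing in
negative degrees) such that:
* for every `i` the cup product gives a perfect pairing
  `H^i(Δ,A) × H^{3-i}(Δ,π;Â) → H³(Δ,π;ℤ/n) ≅ (1/n)ℤ/ℤ`, expressed as an isomorphism
  of `H^i(Δ,A)` with the character group of `H^{3-i}(Δ,π;Â)`;
* the long exact sequence of the pair
  `⋯ → H^i(Δ,π;A) → H^i(Δ,A) → H^i(π,A) → H^{i+1}(Δ,π;A) → ⋯` holds;
* `Â ≅ A` as abelian groups, so `#H^i(Δ,π;Â) = #H^i(Δ,π;A)`.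
Then `χ(Δ,A)² = χ(π,A)`, where `χ` is the multiplicative Euler characteristic
`∏_i (#H^i)^{(-1)^i}` (all groups finite and almost all trivial). -/
theorem stmt18 (HΔA HπA HrelA HrelAhat : ℤ → Type)
    [∀ i, AddCommGroup (HΔA i)] [∀ i, Finite (HΔA i)]
    [∀ i, AddCommGroup (HπA i)] [∀ i, Finite (HπA i)]
    [∀ i, AddCommGroup (HrelA i)] [∀ i, Finite (HrelA i)]
    [∀ i, AddCommGroup (HrelAhat i)] [∀ i, Finite (HrelAhat i)]
    (hneg : ∀ i : ℤ, i < 0 → Subsingleton (HΔA i) ∧ Subsingleton (HπA i)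
        ∧ Subsingleton (HrelA i) ∧ Subsingleton (HrelAhat i))
    (frel : ∀ i : ℤ, HrelA i →+ HΔA i) (fres : ∀ i : ℤ, HΔA i →+ HπA i)
    (fconn : ∀ i : ℤ, HπA i →+ HrelA (i + 1))
    (hex1 : ∀ i : ℤ, Function.Exact (fconn i) (frel (i + 1)))
    (hex2 : ∀ i : ℤ, Function.Exact (frel i) (fres i))
    (hex3 : ∀ i : ℤ, Function.Exact (fres i) (fconn i))
    (hdual : ∀ i : ℤ, Nonempty (HΔA i ≃+ (HrelAhat (3 - i) →+ AddCircle (1 : ℚ))))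
    (hhat : ∀ i : ℤ, Nat.card (HrelAhat i) = Nat.card (HrelA i)) :
    ∀ N : ℕ, (∀ i : ℤ, (N : ℤ) ≤ i → Subsingleton (HΔA i) ∧ Subsingleton (HπA i)
        ∧ Subsingleton (HrelA i) ∧ Subsingleton (HrelAhat i)) →
      (∏ t ∈ Finset.range N, ((Nat.card (HΔA t) : ℚ) ^ ((-1 : ℤ) ^ t))) ^ 2
        = ∏ t ∈ Finset.range N, ((Nat.card (HπA t) : ℚ) ^ ((-1 : ℤ) ^ t)) :=
  stmt18_general HΔA HπA HrelA HrelAhat hneg frel fres fconn hex1 hex2 hex3 hdual hhat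
end
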